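/- Let Σ, Σ' ⊆ S be subsets such that W_Σ and W_{Σ'} are finite, let w ∈ N(Σ, Σ'), and let s ∈ S ∖ Σ'. Then the following conditions are equivalent: (i) ℓ(s w) = ℓ(w) − 1; (ii) s ∈ D(w₀^{Σ'} w) ∖ Σ' = D(w); (iii) the parabolic subgroup W_{Σ'∪{s}} is finite and ℓ(w₀^{Σ'∪{s}} w₀^{Σ'} w) = ℓ(w) − ℓ(w₀^{Σ'∪{s}} w₀^{Σ'}); (iv) T_{Σ'∪{s}} ∖ T_{Σ'} ⊆ T(w₀^{Σ'} w) ∖ T_{Σ'} = T(w). -/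

import Mathlib

/-!
Relative Coxeter groups: common definitions.

`(W, S)` is a Coxeter system (Mathlib's `CoxeterSystem M W`), `ℓ = cs.length`.
For `w : W`, `invSet cs w` is the set `T(w)` of left inversions of `w`, and
`descSet cs w = T(w) ∩ S` is `D(w)`.  For a subset `Sg ⊆ S` (playing the role of `Σ`),
`par Sg` is the standard parabolic subgroup `W_Σ`, `parRefl Sg` its set of
reflections `T_Σ`, `minRight cs Sg = W^Σ`, `minLeft cs Sg = ^ΣW`,
`relN cs Sg Sg' = N(Σ, Σ')`, `IsLongest cs Sg w` says `w` is a longest element of `W_Σ`,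
`longest cs Sg` is the longest element `w₀^Σ`, `relW cs Sg = W̃`,
`complSet cs Sg = Σ^∁`, `tilde cs Sg s = s̃ = w₀^{Σ∪{s}} w₀^Σ`, `relS cs Sg = S̃`,
`relLength cs Sg = ℓ̃ : W → ℕ∞`, and `GoodSubset cs Sg` records the standing
hypotheses (1) and (2) on `Σ`.
-/

namespace RelativeCoxeter

variable {B W : Type*} [Group W] {M : CoxeterMatrix B}

/-- The set `S` of simple reflections of the Coxeter system. -/
def simpleSet (cs : CoxeterSystem M W) : Set W := Set.range cs.simple

/-- `T(w)`: the set of left inversions of `w`, i.e. reflections `t` with `ℓ(tw) < ℓ(w)`. -/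
def invSet (cs : CoxeterSystem M W) (w : W) : Set W :=
  {t | cs.IsReflection t ∧ cs.length (t * w) < cs.length w}

/-- `D(w) = T(w) ∩ S`. -/
def descSet (cs : CoxeterSystem M W) (w : W) : Set W :=
  invSet cs w ∩ simpleSet cs

/-- The standard parabolic subgroup `W_Σ` generated by `Σ`. -/
def par (Sg : Set W) : Subgroup W := Subgroup.closure Sg

/-- `T_Σ`: the set of reflections of the Coxeter system `(W_Σ, Σ)`. -/
def parRefl (Sg : Set W) : Set W :=
  {t | ∃ u ∈ par Sg, ∃ s ∈ Sg, t = u * s * u⁻¹}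

/-- `W^Σ = {w : T(w⁻¹) ∩ T_Σ = ∅}`, minimal-length representatives of `W/W_Σ`. -/
def minRight (cs : CoxeterSystem M W) (Sg : Set W) : Set W :=
  {w | invSet cs w⁻¹ ∩ parRefl Sg = ∅}

/-- `^ΣW = {w : T(w) ∩ T_Σ = ∅}`, minimal-length representatives of `W_Σ\W`. -/
def minLeft (cs : CoxeterSystem M W) (Sg : Set W) : Set W :=
  {w | invSet cs w ∩ parRefl Sg = ∅}

/-- `N(Σ, Σ') = {y ∈ W^Σ ∩ ^{Σ'}W : y W_Σ y⁻¹ = W_{Σ'}}`. -/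
def relN (cs : CoxeterSystem M W) (Sg Sg' : Set W) : Set W :=
  {y | y ∈ minRight cs Sg ∧ y ∈ minLeft cs Sg' ∧
    (fun u => y * u * y⁻¹) '' (par Sg : Set W) = (par Sg' : Set W)}

/-- `w` is a longest element of `W_Σ`. -/
def IsLongest (cs : CoxeterSystem M W) (Sg : Set W) (w : W) : Prop :=
  w ∈ par Sg ∧ ∀ u ∈ par Sg, cs.length u ≤ cs.length w

/-- The longest element `w₀^Σ` of `W_Σ` (defined when it exists; junk value `1` otherwise). -/
noncomputable def longest (cs : CoxeterSystem M W) (Sg : Set W) : W :=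
  letI := Classical.propDecidable (∃ w, IsLongest cs Sg w)
  if h : ∃ w, IsLongest cs Sg w then h.choose else 1

/-- `W̃ = {w : w W_Σ w⁻¹ = W_Σ and T(w) ∩ T_Σ = ∅}`. -/
def relW (cs : CoxeterSystem M W) (Sg : Set W) : Set W :=
  {w | (fun u => w * u * w⁻¹) '' (par Sg : Set W) = (par Sg : Set W) ∧
    invSet cs w ∩ parRefl Sg = ∅}

/-- `Σ^∁ = {s ∈ S ∖ Σ : W_{Σ∪{s}} is finite}`. -/
def complSet (cs : CoxeterSystem M W) (Sg : Set W) : Set W :=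
  {s ∈ simpleSet cs \ Sg | ((par (Sg ∪ {s}) : Set W)).Finite}

/-- `s̃ = w₀^{Σ∪{s}} w₀^Σ`. -/
noncomputable def tilde (cs : CoxeterSystem M W) (Sg : Set W) (s : W) : W :=
  longest cs (Sg ∪ {s}) * longest cs Sg

/-- `S̃ = {s̃ : s ∈ Σ^∁}`. -/
noncomputable def relS (cs : CoxeterSystem M W) (Sg : Set W) : Set W :=
  {w | ∃ s ∈ complSet cs Sg, w = tilde cs Sg s}

/-- `ℓ̃(w) ∈ ℕ ∪ {∞}`: the minimal `q` such that `w = w₁ ⋯ w_q` with all `w_i ∈ S̃`. -/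
noncomputable def relLength (cs : CoxeterSystem M W) (Sg : Set W) (w : W) : ℕ∞ :=
  sInf {q : ℕ∞ | ∃ l : List W, (∀ x ∈ l, x ∈ relS cs Sg) ∧ l.prod = w ∧
    (l.length : ℕ∞) = q}

/-- The standing hypotheses on `Σ`: `Σ ⊆ S`, `W_Σ` is finite, and for every `Σ'` with
`Σ ⊆ Σ' ⊆ S` and `W_{Σ'}` finite, the longest element `w₀^{Σ'}` normalises `W_Σ`. -/
def GoodSubset (cs : CoxeterSystem M W) (Sg : Set W) : Prop :=
  Sg ⊆ simpleSet cs ∧ ((par Sg : Set W)).Finite ∧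
  ∀ Sg' : Set W, Sg ⊆ Sg' → Sg' ⊆ simpleSet cs → ((par Sg' : Set W)).Finite →
    ∀ w0 : W, IsLongest cs Sg' w0 →
      (fun u => w0 * u * w0⁻¹) '' (par Sg : Set W) = (par Sg : Set W)

variable (cs : CoxeterSystem M W)

/-!
The strong exchange property (every left inversion of `π ω` occurs in the left inversion
sequence of `ω`) comes from the action of `W` on pairs (reflection, sign) in which `s i`
conjugates and flips the sign at `s i`; with it, `T(xy) = T(x) ∪ x T(y) x⁻¹` whenever
`ℓ(xy) = ℓ(x) + ℓ(y)`.

For `w ∈ N(Σ, Σ')`, conjugation by `w` is a length-preserving bijection `W_Σ → W_{Σ'}`, so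
`w₀^{Σ'} w = w x` with `x` longest in `W_Σ` and lengths adding; hence
`T(w₀^{Σ'} w) = T(w) ⊔ T_{Σ'}`, which gives the two set identities. If `s ∈ D(w)`, every element
of `Σ' ∪ {s}` is a left descent of `w₀^{Σ'} w`; this bounds lengths in `W_{Σ'∪{s}}`, so it is
finite, and `w₀^{Σ'∪{s}}` shortens `w₀^{Σ'} w` by its full length, which is (iii). Condition (iii)
says `T(s̃⁻¹) ⊆ T(w)`, and `T(s̃⁻¹) = T(w₀^{Σ'} w₀^{Σ'∪{s}})` contains `T_{Σ'∪{s}} ∖ T_{Σ'}`,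
giving (iv); (iv) applied to `s` itself gives back (ii).
-/
section Exchange

open CoxeterSystem
open scoped Classical

theorem prod_map_alternatingWord_two_mul {G : Type*} [Monoid G] (f : B → G) (i j : B) (m : ℕ) :
    ((alternatingWord i j (2 * m)).map f).prod = (f i * f j) ^ m := by
  induction m with
  | zero => simp [alternatingWord]
  | succ m ih =>
    rw [Nat.mul_succ, alternatingWord_succ', alternatingWord_succ']
    simp [ih, pow_succ', mul_assoc]

theorem wordProd_alternatingWord_add_two_mul (i j : B) (n : ℕ) :
    cs.wordProd (alternatingWord i j (n + 2 * M i j)) = cs.wordProd (alternatingWord i j n) := by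
  have hdiv : (n + 2 * M i j) / 2 = n / 2 + M i j := by omega
  simp only [prod_alternatingWord_eq_mul_pow, hdiv, pow_add, cs.simple_mul_simple_pow, mul_one,
    Nat.even_add, even_two_mul, iff_true]

theorem leftInvSeq_alternatingWord_eq_append (i j : B) :
    cs.leftInvSeq (alternatingWord i j (2 * M i j)) =
      (cs.leftInvSeq (alternatingWord i j (2 * M i j))).take (M i j) ++
        (cs.leftInvSeq (alternatingWord i j (2 * M i j))).take (M i j) := by
  apply List.ext_getElem (by simp; omega)
  intro k hk _
  simp only [length_leftInvSeq, length_alternatingWord] at hk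
  rw [getElem_leftInvSeq_alternatingWord _ _ _ _ _ hk, List.getElem_append]
  split_ifs with h <;> rw [List.getElem_take]
  · rw [getElem_leftInvSeq_alternatingWord _ _ _ _ _ hk]
  · simp only [List.length_take, length_leftInvSeq, length_alternatingWord,
      min_eq_left (Nat.le_mul_of_pos_left (M i j) two_pos)] at h ⊢
    have hperiod := wordProd_alternatingWord_add_two_mul cs j i (2 * (k - M i j) + 1)
    rw [M.symmetric j i] at hperiod
    rw [getElem_leftInvSeq_alternatingWord _ _ _ _ _ (by omega), ← hperiod]
    congr 2
    omega

noncomputable def signedConjPerm (i : B) : Equiv.Perm (W × ZMod 2) :=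
  Function.Involutive.toPerm
    (fun p => (cs.simple i * p.1 * cs.simple i, p.2 + if p.1 = cs.simple i then 1 else 0))
    (by
      rintro ⟨t, e⟩
      by_cases h : t = cs.simple i
      · subst h; simp [add_assoc, CharTwo.add_self_eq_zero]
      · simp [h, mul_assoc, mul_eq_one_iff_eq_inv])

theorem signedConjPerm_apply (i : B) (p : W × ZMod 2) :
    signedConjPerm cs i p =
      (cs.simple i * p.1 * cs.simple i, p.2 + if p.1 = cs.simple i then 1 else 0) :=
  rfl

theorem prod_map_signedConjPerm_apply (ω : List B) (t : W) (e : ZMod 2) :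
    (ω.map (signedConjPerm cs)).prod (t, e) =
      (cs.wordProd ω * t * (cs.wordProd ω)⁻¹,
        e + ((cs.leftInvSeq ω).count (cs.wordProd ω * t * (cs.wordProd ω)⁻¹) : ZMod 2)) := by
  induction ω with
  | nil => simp
  | cons i ω ih =>
    have hconj : cs.wordProd (i :: ω) * t * (cs.wordProd (i :: ω))⁻¹ =
        MulAut.conj (cs.simple i) (cs.wordProd ω * t * (cs.wordProd ω)⁻¹) := by
      simp [wordProd_cons, mul_assoc]
    rw [List.map_cons, List.prod_cons, Equiv.Perm.mul_apply, ih, hconj]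
    simp only [signedConjPerm_apply, leftInvSeq, List.count_cons,
      List.count_map_of_injective _ _ (MulAut.conj _).injective]
    set t₁ := cs.wordProd ω * t * (cs.wordProd ω)⁻¹
    by_cases h : t₁ = cs.simple i <;>
      simp [h, add_assoc, mul_eq_one_iff_inv_eq, eq_comm (a := cs.simple i)]

theorem signedConjPerm_isLiftable : M.IsLiftable (signedConjPerm cs) := by
  intro i j
  ext ⟨t, e⟩ : 1
  have hrel : cs.wordProd (alternatingWord i j (2 * M i j)) = 1 := by
    simpa [alternatingWord] using wordProd_alternatingWord_add_two_mul cs i j 0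
  rw [← prod_map_alternatingWord_two_mul, prod_map_signedConjPerm_apply, hrel,
    leftInvSeq_alternatingWord_eq_append, List.count_append]
  simp [CharTwo.add_self_eq_zero]

noncomputable def signedConj : W →* Equiv.Perm (W × ZMod 2) :=
  cs.lift ⟨signedConjPerm cs, signedConjPerm_isLiftable cs⟩

theorem signedConj_simple (i : B) : signedConj cs (cs.simple i) = signedConjPerm cs i :=
  cs.lift_apply_simple (signedConjPerm_isLiftable cs) i

theorem signedConj_wordProd_apply (ω : List B) (t : W) (e : ZMod 2) :
    signedConj cs (cs.wordProd ω) (t, e) =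
      (cs.wordProd ω * t * (cs.wordProd ω)⁻¹,
        e + ((cs.leftInvSeq ω).count (cs.wordProd ω * t * (cs.wordProd ω)⁻¹) : ZMod 2)) := by
  rw [← prod_map_signedConjPerm_apply, wordProd, map_list_prod, List.map_map]
  simp only [Function.comp_def, signedConj_simple]

theorem signedConj_apply_add (w t : W) (e c : ZMod 2) :
    signedConj cs w (t, e + c) =
      ((signedConj cs w (t, e)).1, (signedConj cs w (t, e)).2 + c) := by
  obtain ⟨ω, rfl⟩ := cs.wordProd_surjective w
  simp only [signedConj_wordProd_apply]
  ring_nf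

theorem signedConj_self_apply {t : W} (ht : cs.IsReflection t) (e : ZMod 2) :
    signedConj cs t (t, e) = (t, e + 1) := by
  obtain ⟨u, i, rfl⟩ := ht
  have hback : signedConj cs u (signedConj cs u⁻¹ (u * cs.simple i * u⁻¹, e)) =
      (u * cs.simple i * u⁻¹, e) := by
    rw [← Equiv.Perm.mul_apply, ← map_mul, mul_inv_cancel, map_one, Equiv.Perm.one_apply]
  have hfst : (signedConj cs u⁻¹ (u * cs.simple i * u⁻¹, e)).1 = cs.simple i := by
    obtain ⟨ω, hω⟩ := cs.wordProd_surjective u⁻¹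
    rw [← hω, signedConj_wordProd_apply, hω]
    group
  set p := signedConj cs u⁻¹ (u * cs.simple i * u⁻¹, e)
  have hflip : signedConj cs (cs.simple i) p = (p.1, p.2 + 1) := by
    rw [signedConj_simple, signedConjPerm_apply, hfst]
    simp
  rw [map_mul, map_mul, Equiv.Perm.mul_apply, Equiv.Perm.mul_apply, hflip, signedConj_apply_add,
    Prod.mk.eta, hback]

theorem mem_leftInvSeq_of_isLeftInversion {ω : List B} {t : W}
    (ht : cs.IsLeftInversion (cs.wordProd ω) t) : t ∈ cs.leftInvSeq ω := by
  -- otherwise `t * w` flips the sign attached to `t`, making `t` a left inversion of `t * w` too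
  by_contra hnot
  set w := cs.wordProd ω
  obtain ⟨ω', hω', htw⟩ := cs.exists_isReduced (t * w)
  have hw : signedConj cs w (w⁻¹ * t * w, 0) = (t, 0) := by
    simp [w, signedConj_wordProd_apply, mul_assoc, List.count_eq_zero_of_not_mem hnot]
  have htw' : signedConj cs (t * w) (w⁻¹ * t * w, 0) = (t, 1) := by
    rw [map_mul, Equiv.Perm.mul_apply, hw, signedConj_self_apply cs ht.1, zero_add]
  have hconj : (t * w)⁻¹ * t * (t * w) = w⁻¹ * t * w := by
    simp only [mul_inv_rev, ht.1.inv, mul_assoc]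
    rw [← mul_assoc t t, ht.1.mul_self, one_mul]
  have hcount : ((cs.leftInvSeq ω').count t : ZMod 2) = 1 := by
    have h := signedConj_wordProd_apply cs ω' ((cs.wordProd ω')⁻¹ * t * cs.wordProd ω') 0
    rw [← htw, hconj, htw', show t * w * (w⁻¹ * t * w) * (t * w)⁻¹ = t by group] at h
    simpa using (congrArg Prod.snd h).symm
  have hmem : t ∈ cs.leftInvSeq ω' := by
    by_contra h
    simp [List.count_eq_zero_of_not_mem h] at hcount
  have hlt := (cs.isLeftInversion_of_mem_leftInvSeq hω' hmem).2
  rw [← htw, ← mul_assoc, ht.1.mul_self, one_mul] at hlt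
  exact absurd ht.2 (by omega)

end Exchange

section Inversions

open CoxeterSystem

theorem leftInvSeq_append (α β : List B) :
    cs.leftInvSeq (α ++ β) =
      cs.leftInvSeq α ++ (cs.leftInvSeq β).map (MulAut.conj (cs.wordProd α)) := by
  induction α with
  | nil => simp
  | cons i α ih => simp [leftInvSeq, ih, wordProd_cons, Function.comp_def]

theorem mem_invSet_iff_mem_leftInvSeq {ω : List B} (hω : cs.IsReduced ω) {t : W} :
    t ∈ invSet cs (cs.wordProd ω) ↔ t ∈ cs.leftInvSeq ω :=
  ⟨fun ht => mem_leftInvSeq_of_isLeftInversion cs ht,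
    fun ht => cs.isLeftInversion_of_mem_leftInvSeq hω ht⟩

theorem invSet_mul_of_length_add {x y : W}
    (hxy : cs.length (x * y) = cs.length x + cs.length y) :
    invSet cs (x * y) = invSet cs x ∪ (fun t => x * t * x⁻¹) '' invSet cs y := by
  obtain ⟨α, hα, rfl⟩ := cs.exists_isReduced x
  obtain ⟨β, hβ, rfl⟩ := cs.exists_isReduced y
  have hαβ : cs.IsReduced (α ++ β) := by
    rw [CoxeterSystem.IsReduced, wordProd_append, hxy, hα.eq, hβ.eq, List.length_append]
  ext t
  rw [← wordProd_append, mem_invSet_iff_mem_leftInvSeq cs hαβ, leftInvSeq_append, Set.mem_union,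
    mem_invSet_iff_mem_leftInvSeq cs hα, List.mem_append, List.mem_map]
  simp [mem_invSet_iff_mem_leftInvSeq cs hβ]

theorem invSet_one : invSet cs 1 = ∅ := by
  ext t
  simp [invSet]

theorem invSet_simple (i : B) : invSet cs (cs.simple i) = {cs.simple i} := by
  ext t
  simpa using mem_invSet_iff_mem_leftInvSeq cs (ω := [i]) (by simp [CoxeterSystem.IsReduced])

theorem simple_mem_invSet_iff (i : B) (w : W) :
    cs.simple i ∈ invSet cs w ↔ cs.length (cs.simple i * w) + 1 = cs.length w := by
  rcases cs.length_simple_mul w i with h | h <;>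
    simp only [invSet, Set.mem_ofPred_eq, cs.isReflection_simple, true_and] <;> omega

theorem exists_isReduced_simple_mul {ω : List B} (hω : cs.IsReduced ω) (i : B) :
    ∃ ω', cs.IsReduced ω' ∧ ω' ⊆ i :: ω ∧ cs.wordProd ω' = cs.simple i * cs.wordProd ω := by
  rcases cs.length_simple_mul (cs.wordProd ω) i with h | h
  · refine ⟨i :: ω, ?_, List.Subset.refl _, wordProd_cons ..⟩
    rw [CoxeterSystem.IsReduced, wordProd_cons, h, hω.eq, List.length_cons]
  · have hmem : cs.simple i ∈ cs.leftInvSeq ω :=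
      mem_leftInvSeq_of_isLeftInversion cs ⟨cs.isReflection_simple i, by omega⟩
    obtain ⟨j, hj, hji⟩ := List.getElem_of_mem hmem
    have hj' : j < ω.length := by simpa using hj
    have hdel := cs.getD_leftInvSeq_mul_wordProd ω j
    rw [List.getD_eq_getElem _ _ hj, hji] at hdel
    refine ⟨ω.eraseIdx j, ?_,
      List.Subset.trans (List.eraseIdx_sublist ω j).subset (List.subset_cons_self i ω),
      hdel.symm⟩
    rw [CoxeterSystem.IsReduced, ← hdel, List.length_eraseIdx_of_lt hj']
    have := hω.eq
    omega

end Inversions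

section Parabolic

variable {Sg : Set W}

theorem wordProd_mem_par {ω : List B} (hω : ∀ i ∈ ω, cs.simple i ∈ Sg) :
    cs.wordProd ω ∈ par Sg := by
  induction ω with
  | nil => exact one_mem _
  | cons i ω ih =>
    rw [cs.wordProd_cons]
    exact mul_mem (Subgroup.subset_closure (hω i List.mem_cons_self))
      (ih fun j hj => hω j (List.mem_cons_of_mem i hj))

theorem exists_isReduced_of_mem_par (hSg : Sg ⊆ simpleSet cs) {u : W} (hu : u ∈ par Sg) :
    ∃ ω, cs.IsReduced ω ∧ (∀ i ∈ ω, cs.simple i ∈ Sg) ∧ cs.wordProd ω = u := by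
  have step : ∀ x ∈ Sg, ∀ y, (∃ ω, cs.IsReduced ω ∧ (∀ i ∈ ω, cs.simple i ∈ Sg) ∧
      cs.wordProd ω = y) → ∃ ω, cs.IsReduced ω ∧ (∀ i ∈ ω, cs.simple i ∈ Sg) ∧
      cs.wordProd ω = x * y := by
    rintro _ hx _ ⟨ω, hω, hωS, rfl⟩
    obtain ⟨i, rfl⟩ := hSg hx
    obtain ⟨ω', hω', hsub, hprod⟩ := exists_isReduced_simple_mul cs hω i
    refine ⟨ω', hω', fun j hj => ?_, hprod⟩
    rcases List.mem_cons.mp (hsub hj) with rfl | hj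
    exacts [hx, hωS j hj]
  induction hu using Subgroup.closure_induction_left with
  | one => exact ⟨[], by simp [CoxeterSystem.IsReduced], by simp, rfl⟩
  | mul_left x hx y _ ih => exact step x hx y ih
  | inv_mul_cancel x hx y _ ih =>
    obtain ⟨i, rfl⟩ := hSg hx
    simpa using step _ hx y ih

theorem par_induction (hSg : Sg ⊆ simpleSet cs) {P : W → Prop} (one : P 1)
    (simple_mul : ∀ i, cs.simple i ∈ Sg → ∀ u ∈ par Sg,
      cs.length (cs.simple i * u) = cs.length u + 1 → P u → P (cs.simple i * u))
    {u : W} (hu : u ∈ par Sg) : P u := by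
  obtain ⟨ω, hω, hωS, rfl⟩ := exists_isReduced_of_mem_par cs hSg hu
  clear hu
  induction ω with
  | nil => simpa using one
  | cons i ω ih =>
    have hω' : cs.IsReduced ω := by simpa using hω.drop 1
    have hωS' : ∀ j ∈ ω, cs.simple j ∈ Sg := fun j hj => hωS j (List.mem_cons_of_mem i hj)
    rw [cs.wordProd_cons]
    refine simple_mul i (hωS i List.mem_cons_self) _ (wordProd_mem_par cs hωS') ?_ (ih hω' hωS')
    rw [← cs.wordProd_cons, hω.eq, hω'.eq, List.length_cons]

theorem simple_mem_par_iff (hSg : Sg ⊆ simpleSet cs) (i : B) :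
    cs.simple i ∈ par Sg ↔ cs.simple i ∈ Sg := by
  refine ⟨fun h => ?_, fun h => Subgroup.subset_closure h⟩
  refine par_induction cs hSg (P := fun u => cs.length u = 1 → u ∈ Sg) (by simp)
    (fun j hj v _ hlen _ h1 => ?_) h (cs.length_simple i)
  rw [cs.length_eq_zero_iff.mp (by omega : cs.length v = 0), mul_one]
  exact hj

theorem parRefl_subset_par : parRefl Sg ⊆ par Sg := by
  rintro _ ⟨u, hu, σ, hσ, rfl⟩
  exact mul_mem (mul_mem hu (Subgroup.subset_closure hσ)) (inv_mem hu)

theorem isReflection_of_mem_parRefl (hSg : Sg ⊆ simpleSet cs) {t : W} (ht : t ∈ parRefl Sg) :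
    cs.IsReflection t := by
  obtain ⟨u, -, σ, hσ, rfl⟩ := ht
  obtain ⟨i, rfl⟩ := hSg hσ
  exact ⟨u, i, rfl⟩

theorem mem_parRefl_of_mem {σ : W} (hσ : σ ∈ Sg) : σ ∈ parRefl Sg :=
  ⟨1, one_mem _, σ, hσ, by simp⟩

theorem conj_mem_parRefl {u t : W} (hu : u ∈ par Sg) (ht : t ∈ parRefl Sg) :
    u * t * u⁻¹ ∈ parRefl Sg := by
  obtain ⟨v, hv, σ, hσ, rfl⟩ := ht
  exact ⟨u * v, mul_mem hu hv, σ, hσ, by group⟩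

theorem parRefl_inter_simpleSet (hSg : Sg ⊆ simpleSet cs) : parRefl Sg ∩ simpleSet cs = Sg := by
  refine Set.Subset.antisymm ?_ fun σ hσ => ⟨mem_parRefl_of_mem hσ, hSg hσ⟩
  rintro _ ⟨ht, i, rfl⟩
  exact (simple_mem_par_iff cs hSg i).mp (parRefl_subset_par ht)

theorem invSet_subset_parRefl (hSg : Sg ⊆ simpleSet cs) {u : W} (hu : u ∈ par Sg) :
    invSet cs u ⊆ parRefl Sg := by
  refine par_induction cs hSg (P := fun u => invSet cs u ⊆ parRefl Sg)
    (by simp [invSet_one]) (fun i hi v _ hlen hv => ?_) hu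
  rw [invSet_mul_of_length_add cs (by rw [hlen, cs.length_simple, add_comm]), invSet_simple]
  rintro t (rfl | ⟨r, hr, rfl⟩)
  exacts [mem_parRefl_of_mem hi, conj_mem_parRefl (Subgroup.subset_closure hi) (hv hr)]

theorem length_mul_of_mem_minLeft (hSg : Sg ⊆ simpleSet cs) {b : W} (hb : b ∈ minLeft cs Sg)
    {u : W} (hu : u ∈ par Sg) : cs.length (u * b) = cs.length u + cs.length b := by
  refine par_induction cs hSg (P := fun u => cs.length (u * b) = cs.length u + cs.length b)
    (by simp) (fun i hi v hv hlen ih => ?_) hu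
  rw [hlen, mul_assoc]
  by_contra hne
  have hdesc : cs.simple i ∈ invSet cs (v * b) := by
    rcases cs.length_simple_mul (v * b) i with h | h
    · omega
    · exact (simple_mem_invSet_iff cs i _).mpr h
  rw [invSet_mul_of_length_add cs ih] at hdesc
  rcases hdesc with hv' | ⟨r, hr, hri⟩
  · rw [simple_mem_invSet_iff] at hv'
    omega
  · have hr' : r ∈ parRefl Sg := by
      simpa [← hri, mul_assoc] using conj_mem_parRefl (inv_mem hv) (mem_parRefl_of_mem hi)
    exact (Set.eq_empty_iff_forall_notMem.mp hb) r ⟨hr, hr'⟩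

theorem length_mul_of_mem_minRight (hSg : Sg ⊆ simpleSet cs) {b : W} (hb : b ∈ minRight cs Sg)
    {u : W} (hu : u ∈ par Sg) : cs.length (b * u) = cs.length b + cs.length u := by
  have h := length_mul_of_mem_minLeft cs hSg (b := b⁻¹) hb (inv_mem hu)
  rwa [← mul_inv_rev, cs.length_inv, cs.length_inv, cs.length_inv, add_comm] at h

theorem length_mul_add_length_of_subset_invSet (hSg : Sg ⊆ simpleSet cs) {v : W}
    (hv : Sg ⊆ invSet cs v) {u : W} (hu : u ∈ par Sg) :
    cs.length (u * v) + cs.length u = cs.length v := by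
  have key : ∀ x ∈ par Sg, cs.length (x⁻¹ * v) + cs.length x = cs.length v := fun x hx =>
    par_induction cs hSg (P := fun x => cs.length (x⁻¹ * v) + cs.length x = cs.length v)
      (by simp) (fun i hi x _ hlen ih => by
        have hv' : x * (x⁻¹ * v) = v := mul_inv_cancel_left x v
        have hi' := hv hi
        rw [← hv', invSet_mul_of_length_add cs (by rw [hv']; omega)] at hi'
        -- `s i` is not a left inversion of `x`, so `x⁻¹ (s i) x` is one of `x⁻¹ v`
        rcases hi' with hx' | ⟨r, hr, hri⟩
        · rw [simple_mem_invSet_iff] at hx'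
          omega
        have hrz : (cs.simple i * x)⁻¹ * v = r * (x⁻¹ * v) := by
          rw [mul_inv_rev, cs.inv_simple, ← hri]
          group
        have hle := cs.length_mul_le (cs.simple i * x) ((cs.simple i * x)⁻¹ * v)
        rw [mul_inv_cancel_left, hrz] at hle
        have hlt := hr.2
        rw [hrz]
        omega) hx
  simpa using key u⁻¹ (inv_mem hu)

end Parabolic

section Longest

variable {Sg : Set W}

theorem par_finite_of_subset_invSet (hSg : Sg ⊆ simpleSet cs) (hfinS : Sg.Finite) {v : W}
    (hv : Sg ⊆ invSet cs v) : (par Sg : Set W).Finite := by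
  have : Finite Sg := hfinS.to_subtype
  refine ((List.finite_length_le Sg (cs.length v)).image
    fun l => (l.map Subtype.val).prod).subset fun u hu => ?_
  obtain ⟨l, hl, rfl⟩ := par_induction cs hSg
    (P := fun u => ∃ l : List Sg, l.length = cs.length u ∧ (l.map Subtype.val).prod = u)
    ⟨[], by simp, by simp⟩
    (fun i hi x _ hlen ⟨l, hl, hx⟩ => ⟨⟨_, hi⟩ :: l, by simp [hl, hlen], by simpa using hx⟩) hu
  have := length_mul_add_length_of_subset_invSet cs hSg hv hu
  exact ⟨l, by simp only [Set.mem_ofPred_eq]; omega, rfl⟩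

theorem exists_isLongest (hfin : (par Sg : Set W).Finite) : ∃ x, IsLongest cs Sg x :=
  (Set.exists_max_image _ cs.length hfin ⟨1, one_mem _⟩).imp fun _ h => h

theorem isLongest_longest (hfin : (par Sg : Set W).Finite) : IsLongest cs Sg (longest cs Sg) := by
  have hex := exists_isLongest cs hfin
  rw [longest, dif_pos hex]
  exact hex.choose_spec

theorem IsLongest.length_mul_add_length (hSg : Sg ⊆ simpleSet cs) {x : W}
    (hx : IsLongest cs Sg x) {u : W} (hu : u ∈ par Sg) :
    cs.length (x * u) + cs.length u = cs.length x := by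
  have hdesc : Sg ⊆ invSet cs x⁻¹ := by
    intro σ hσ
    obtain ⟨i, rfl⟩ := hSg hσ
    refine ⟨cs.isReflection_simple i, ?_⟩
    rw [← cs.length_inv, mul_inv_rev, inv_inv, cs.inv_simple, cs.length_inv]
    exact lt_of_le_of_ne (hx.2 _ (mul_mem hx.1 (Subgroup.subset_closure hσ)))
      (cs.length_mul_simple_ne x i)
  simpa [← mul_inv_rev] using length_mul_add_length_of_subset_invSet cs hSg hdesc (inv_mem hu)

theorem IsLongest.unique (hSg : Sg ⊆ simpleSet cs) {x y : W} (hx : IsLongest cs Sg x)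
    (hy : IsLongest cs Sg y) : x = y := by
  have h := hx.length_mul_add_length cs hSg (mul_mem (inv_mem hx.1) hy.1)
  rw [mul_inv_cancel_left] at h
  have hxy := hx.2 y hy.1
  have hyx := hy.2 x hx.1
  exact inv_mul_eq_one.mp (cs.length_eq_zero_iff.mp (by omega))

theorem longest_inv (hSg : Sg ⊆ simpleSet cs) (hfin : (par Sg : Set W).Finite) :
    (longest cs Sg)⁻¹ = longest cs Sg := by
  have h := isLongest_longest cs hfin
  exact IsLongest.unique cs hSg ⟨inv_mem h.1, fun u hu => by rw [cs.length_inv]; exact h.2 u hu⟩ h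

theorem IsLongest.mem_invSet {x : W} (hx : IsLongest cs Sg x) {t : W} (ht : cs.IsReflection t)
    (htS : t ∈ par Sg) : t ∈ invSet cs x :=
  ⟨ht, lt_of_le_of_ne (hx.2 _ (mul_mem htS hx.1)) (ht.length_mul_right_ne x)⟩

theorem IsLongest.invSet_eq (hSg : Sg ⊆ simpleSet cs) {x : W} (hx : IsLongest cs Sg x) :
    invSet cs x = parRefl Sg :=
  (invSet_subset_parRefl cs hSg hx.1).antisymm fun _ ht =>
    hx.mem_invSet cs (isReflection_of_mem_parRefl cs hSg ht) (parRefl_subset_par ht)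

theorem parRefl_eq_of_finite (hSg : Sg ⊆ simpleSet cs) (hfin : (par Sg : Set W).Finite) :
    parRefl Sg = {t | cs.IsReflection t ∧ t ∈ par Sg} := by
  obtain ⟨x, hx⟩ := exists_isLongest cs hfin
  ext t
  refine ⟨fun ht => ⟨isReflection_of_mem_parRefl cs hSg ht, parRefl_subset_par ht⟩, ?_⟩
  rintro ⟨ht, htS⟩
  exact hx.invSet_eq cs hSg ▸ hx.mem_invSet cs ht htS

theorem image_conj_parRefl {Sg' : Set W} (hSg : Sg ⊆ simpleSet cs) (hSg' : Sg' ⊆ simpleSet cs)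
    (hfin : (par Sg : Set W).Finite) (hfin' : (par Sg' : Set W).Finite) {w : W}
    (hw : (fun u => w * u * w⁻¹) '' (par Sg : Set W) = par Sg') :
    (fun t => w * t * w⁻¹) '' parRefl Sg = parRefl Sg' := by
  rw [parRefl_eq_of_finite cs hSg hfin, parRefl_eq_of_finite cs hSg' hfin']
  ext t
  constructor
  · rintro ⟨t, ⟨ht, htS⟩, rfl⟩
    refine ⟨ht.conj w, ?_⟩
    rw [← SetLike.mem_coe, ← hw]
    exact ⟨t, htS, rfl⟩
  · rintro ⟨ht, htS⟩
    obtain ⟨u, hu, rfl⟩ : t ∈ (fun u => w * u * w⁻¹) '' (par Sg : Set W) := by rwa [hw]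
    exact ⟨u, ⟨(cs.isReflection_conj_iff w u).mp ht, hu⟩, rfl⟩

theorem parRefl_diff_subset_invSet_longest_mul {Sg₁ Sg₂ : Set W} (h₁₂ : Sg₁ ⊆ Sg₂)
    (hSg₂ : Sg₂ ⊆ simpleSet cs) (hfin₁ : (par Sg₁ : Set W).Finite)
    (hfin₂ : (par Sg₂ : Set W).Finite) :
    parRefl Sg₂ \ parRefl Sg₁ ⊆ invSet cs (longest cs Sg₁ * longest cs Sg₂) := by
  have hSg₁ : Sg₁ ⊆ simpleSet cs := h₁₂.trans hSg₂
  have ha := isLongest_longest cs hfin₁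
  have hb := isLongest_longest cs hfin₂
  have hainv := longest_inv cs hSg₁ hfin₁
  have hbinv := longest_inv cs hSg₂ hfin₂
  set a := longest cs Sg₁
  set b := longest cs Sg₂
  have hpar : par Sg₁ ≤ par Sg₂ := Subgroup.closure_mono h₁₂
  have haa : a * a = 1 := by
    nth_rewrite 1 [← hainv]
    exact inv_mul_cancel a
  have hlen : cs.length (a * (a * b)) = cs.length a + cs.length (a * b) := by
    have h := hb.length_mul_add_length cs hSg₂ (hpar ha.1)
    rw [← cs.length_inv (b * a), mul_inv_rev, hainv, hbinv] at h
    rw [← mul_assoc, haa, one_mul]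
    omega
  have hsplit := invSet_mul_of_length_add cs hlen
  rw [← mul_assoc, haa, one_mul, hb.invSet_eq cs hSg₂, ha.invSet_eq cs hSg₁] at hsplit
  rintro t ⟨ht₂, ht₁⟩
  -- `a t a` lies in `T(b) ∖ T(a)`, so it is `a r a` for some `r ∈ T(a b)`
  have hconj : a * t * a⁻¹ ∈ parRefl Sg₂ := conj_mem_parRefl (hpar ha.1) ht₂
  rw [hsplit] at hconj
  rcases hconj with h | ⟨r, hr, hrt⟩
  · have h' := conj_mem_parRefl (inv_mem ha.1) h
    rw [show a⁻¹ * (a * t * a⁻¹) * a⁻¹⁻¹ = t by group] at h'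
    exact absurd h' ht₁
  · obtain rfl := mul_left_cancel (mul_right_cancel hrt)
    exact hr

end Longest

section Relative

variable {Sg Sg' : Set W} {w : W}

theorem length_conj_of_mem_relN (hSg : Sg ⊆ simpleSet cs) (hSg' : Sg' ⊆ simpleSet cs)
    (hw : w ∈ relN cs Sg Sg') {u : W} (hu : u ∈ par Sg) :
    cs.length (w * u * w⁻¹) = cs.length u := by
  have hu' : w * u * w⁻¹ ∈ par Sg' := by
    rw [← SetLike.mem_coe, ← hw.2.2]
    exact ⟨u, hu, rfl⟩
  have h₁ := length_mul_of_mem_minLeft cs hSg' hw.2.1 hu'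
  have h₂ := length_mul_of_mem_minRight cs hSg hw.1 hu
  rw [inv_mul_cancel_right] at h₁
  omega

theorem exists_isLongest_longest_mul_eq (hSg : Sg ⊆ simpleSet cs) (hSg' : Sg' ⊆ simpleSet cs)
    (hfin' : (par Sg' : Set W).Finite) (hw : w ∈ relN cs Sg Sg') :
    ∃ x, IsLongest cs Sg x ∧ longest cs Sg' * w = w * x := by
  have hL := isLongest_longest cs hfin'
  obtain ⟨x, hx, hxw⟩ : longest cs Sg' ∈ (fun u => w * u * w⁻¹) '' (par Sg : Set W) := by
    rw [hw.2.2]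
    exact hL.1
  refine ⟨x, ⟨hx, fun u hu => ?_⟩, by rw [← hxw]; group⟩
  rw [← length_conj_of_mem_relN cs hSg hSg' hw hu, ← length_conj_of_mem_relN cs hSg hSg' hw hx]
  simp only at hxw
  rw [hxw]
  refine hL.2 _ ?_
  rw [← SetLike.mem_coe, ← hw.2.2]
  exact ⟨u, hu, rfl⟩

theorem invSet_longest_mul_of_mem_relN (hSg : Sg ⊆ simpleSet cs) (hSg' : Sg' ⊆ simpleSet cs)
    (hfin : (par Sg : Set W).Finite) (hfin' : (par Sg' : Set W).Finite)
    (hw : w ∈ relN cs Sg Sg') :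
    invSet cs (longest cs Sg' * w) = invSet cs w ∪ parRefl Sg' := by
  obtain ⟨x, hx, hxw⟩ := exists_isLongest_longest_mul_eq cs hSg hSg' hfin' hw
  rw [hxw, invSet_mul_of_length_add cs (length_mul_of_mem_minRight cs hSg hw.1 hx.1),
    hx.invSet_eq cs hSg, image_conj_parRefl cs hSg hSg' hfin hfin' hw.2.2]

theorem finite_and_length_tilde_mul (hSg : Sg ⊆ simpleSet cs) (hSg' : Sg' ⊆ simpleSet cs)
    (hfin : (par Sg : Set W).Finite) (hfin' : (par Sg' : Set W).Finite)
    (hw : w ∈ relN cs Sg Sg') {i : B} (hi : cs.simple i ∈ invSet cs w) :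
    (par (Sg' ∪ {cs.simple i}) : Set W).Finite ∧
      cs.length (tilde cs Sg' (cs.simple i) * w) + cs.length (tilde cs Sg' (cs.simple i)) =
        cs.length w := by
  have hSg'' : Sg' ∪ {cs.simple i} ⊆ simpleSet cs :=
    Set.union_subset hSg' (Set.singleton_subset_iff.mpr ⟨i, rfl⟩)
  have hdesc : Sg' ∪ {cs.simple i} ⊆ invSet cs (longest cs Sg' * w) := by
    rw [invSet_longest_mul_of_mem_relN cs hSg hSg' hfin hfin' hw]
    exact Set.union_subset (fun σ hσ => Or.inr (mem_parRefl_of_mem hσ))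
      (Set.singleton_subset_iff.mpr (Or.inl hi))
  have hfin'' := par_finite_of_subset_invSet cs hSg''
    ((hfin'.subset (Subgroup.subset_closure : Sg' ⊆ par Sg')).union (Set.finite_singleton _)) hdesc
  refine ⟨hfin'', ?_⟩
  have hL' := isLongest_longest cs hfin'
  have hL'' := isLongest_longest cs hfin''
  have h₁ := length_mul_add_length_of_subset_invSet cs hSg'' hdesc hL''.1
  have h₂ := length_mul_of_mem_minLeft cs hSg' hw.2.1 hL'.1
  have h₃ := hL''.length_mul_add_length cs hSg''
    (Subgroup.closure_mono Set.subset_union_left hL'.1)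
  rw [tilde, mul_assoc]
  omega

end Relative

theorem parRefl_union_diff_subset_invSet {Sg' : Set W} (hSg' : Sg' ⊆ simpleSet cs) {s : W}
    (hs : s ∈ simpleSet cs) (hfin' : (par Sg' : Set W).Finite)
    (hfin'' : (par (Sg' ∪ {s}) : Set W).Finite) {w : W}
    (hw : cs.length (tilde cs Sg' s * w) + cs.length (tilde cs Sg' s) = cs.length w) :
    parRefl (Sg' ∪ {s}) \ parRefl Sg' ⊆ invSet cs w := by
  have hSg'' : Sg' ∪ {s} ⊆ simpleSet cs := Set.union_subset hSg' (Set.singleton_subset_iff.mpr hs)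
  have hinv : (tilde cs Sg' s)⁻¹ = longest cs Sg' * longest cs (Sg' ∪ {s}) := by
    rw [tilde, mul_inv_rev, longest_inv cs hSg' hfin', longest_inv cs hSg'' hfin'']
  have hsplit := invSet_mul_of_length_add cs (x := (tilde cs Sg' s)⁻¹) (y := tilde cs Sg' s * w)
    (by rw [inv_mul_cancel_left, cs.length_inv]; omega)
  rw [inv_mul_cancel_left, hinv] at hsplit
  exact (parRefl_diff_subset_invSet_longest_mul cs Set.subset_union_left hSg'' hfin' hfin'').trans
    (hsplit ▸ Set.subset_union_left)

/-- for `w ∈ N(Σ, Σ')` with `W_Σ, W_{Σ'}` finite and `s ∈ S ∖ Σ'`, one has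
`D(w₀^{Σ'}w) ∖ Σ' = D(w)` and `T(w₀^{Σ'}w) ∖ T_{Σ'} = T(w)`, and the conditions
(i) `ℓ(sw) = ℓ(w) − 1`; (ii) `s ∈ D(w)`; (iii) `W_{Σ'∪{s}}` is finite and
`ℓ(w₀^{Σ'∪{s}} w₀^{Σ'} w) = ℓ(w) − ℓ(w₀^{Σ'∪{s}} w₀^{Σ'})`;
(iv) `T_{Σ'∪{s}} ∖ T_{Σ'} ⊆ T(w)` are all equivalent. -/
theorem descent_dichotomy (Sg Sg' : Set W) (hSg : Sg ⊆ simpleSet cs)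
    (hSg' : Sg' ⊆ simpleSet cs) (hfin : ((par Sg : Set W)).Finite)
    (hfin' : ((par Sg' : Set W)).Finite)
    (w : W) (hw : w ∈ relN cs Sg Sg') (s : W) (hs : s ∈ simpleSet cs \ Sg') :
    descSet cs (longest cs Sg' * w) \ Sg' = descSet cs w ∧
    invSet cs (longest cs Sg' * w) \ parRefl Sg' = invSet cs w ∧
    [cs.length (s * w) + 1 = cs.length w,
      s ∈ descSet cs w,
      ((par (Sg' ∪ {s}) : Set W)).Finite ∧
        cs.length (tilde cs Sg' s * w) + cs.length (tilde cs Sg' s) = cs.length w,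
      parRefl (Sg' ∪ {s}) \ parRefl Sg' ⊆ invSet cs w].TFAE := by
  obtain ⟨⟨i, rfl⟩, hi⟩ := hs
  have hT := invSet_longest_mul_of_mem_relN cs hSg hSg' hfin hfin' hw
  have hdisj : Disjoint (invSet cs w) (parRefl Sg') := Set.disjoint_iff_inter_eq_empty.mpr hw.2.1
  refine ⟨?_, by rw [hT, Set.union_sdiff_right, hdisj.sdiff_eq_left], ?_⟩
  · rw [descSet, descSet, hT, Set.union_inter_distrib_right, parRefl_inter_simpleSet cs hSg',
      Set.union_sdiff_right]
    exact (hdisj.mono Set.inter_subset_left fun σ => mem_parRefl_of_mem).sdiff_eq_left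
  tfae_have 1 ↔ 2 := ⟨fun h => ⟨(simple_mem_invSet_iff cs i w).mpr h, i, rfl⟩,
    fun h => (simple_mem_invSet_iff cs i w).mp h.1⟩
  tfae_have 2 → 3 := fun h => finite_and_length_tilde_mul cs hSg hSg' hfin hfin' hw h.1
  tfae_have 3 → 4 := fun ⟨hfin'', hlen⟩ =>
    parRefl_union_diff_subset_invSet cs hSg' ⟨i, rfl⟩ hfin' hfin'' hlen
  tfae_have 4 → 2 := fun h => ⟨h ⟨mem_parRefl_of_mem (Or.inr rfl),
    fun h' => hi ((parRefl_inter_simpleSet cs hSg').subset ⟨h', i, rfl⟩)⟩, i, rfl⟩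
  tfae_finish

end RelativeCoxeter
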